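/- For any (α,α′) ∈ ℝ^n × ℝ, the maximum of α·x + α′ y over (x,y) ∈ conv(G) equals max over k ∈ {0,…,n} of u Σ_{j=1}^k α_{σ(j)} + ℓ Σ_{j=k+1}^n α_{σ(j)} + α′·m(x^k), where σ is any permutation of {1,…,n} with α_{σ(1)} ≥ α_{σ(2)} ≥ … ≥ α_{σ(n)}. -/

import Mathlib

open Finset

/-- The symmetric multilinear polynomial `m(x) = ∑_{i=2}^n c_i ∑_{|J|=i} ∏_{j∈J} x_j`. -/
noncomputable def mPoly (n : ℕ) (c : ℕ → ℝ) (x : Fin n → ℝ) : ℝ :=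
  ∑ i ∈ Finset.Icc 2 n, c i *
    ∑ J ∈ Finset.powersetCard i (Finset.univ : Finset (Fin n)), ∏ j ∈ J, x j

/-- The box `X = [ℓ,u]^n`. -/
def Xbox (n : ℕ) (ℓ u : ℝ) : Set (Fin n → ℝ) :=
  {x | ∀ j, x j ∈ Set.Icc ℓ u}

/-- The graph `G = {(x,y) : x ∈ X, y = m(x)}`. -/
def Gset (n : ℕ) (ℓ u : ℝ) (c : ℕ → ℝ) : Set ((Fin n → ℝ) × ℝ) :=
  {p | p.1 ∈ Xbox n ℓ u ∧ p.2 = mPoly n c p.1}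

/-- The point `x^k` whose first `k` coordinates are `u` and remaining ones are `ℓ`. -/
def xpt (n : ℕ) (ℓ u : ℝ) (k : ℕ) : Fin n → ℝ :=
  fun j => if (j : ℕ) < k then u else ℓ

/-- `m(x^k)`. -/
noncomputable def mval (n : ℕ) (ℓ u : ℝ) (c : ℕ → ℝ) (k : ℕ) : ℝ :=
  mPoly n c (xpt n ℓ u k)

/-- `L_k(β₀,β) = β₀ + u ∑_{j=1}^k β_j + ℓ ∑_{j=k+1}^n β_j`. -/
noncomputable def Lk (n : ℕ) (ℓ u : ℝ) (β₀ : ℝ) (β : Fin n → ℝ) (k : ℕ) : ℝ :=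
  β₀ + u * ∑ j ∈ Finset.univ.filter (fun j : Fin n => (j : ℕ) < k), β j
     + ℓ * ∑ j ∈ Finset.univ.filter (fun j : Fin n => k ≤ (j : ℕ)), β j

/-- The left-hand side `β₀ + ∑_j β_j x_j + β′ y` of an inequality, at the point `p = (x,y)`. -/
noncomputable def ineqLhs (n : ℕ) (β₀ : ℝ) (β : Fin n → ℝ) (β' : ℝ)
    (p : (Fin n → ℝ) × ℝ) : ℝ :=
  β₀ + ∑ j, β j * p.1 j + β' * p.2

/-- A core inequality: `β′ ∈ {1,-1}` and nondecreasing coefficients `β₁ ≤ … ≤ βₙ`. -/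
def IsCore (n : ℕ) (β : Fin n → ℝ) (β' : ℝ) : Prop :=
  (β' = 1 ∨ β' = -1) ∧ Monotone β

/-- Validity of the inequality `β₀ + ∑_j β_j x_j + β′ y ≥ 0` on `conv(G)`. -/
def IsValid (n : ℕ) (ℓ u : ℝ) (c : ℕ → ℝ) (β₀ : ℝ) (β : Fin n → ℝ) (β' : ℝ) : Prop :=
  ∀ p ∈ convexHull ℝ (Gset n ℓ u c), 0 ≤ ineqLhs n β₀ β β' p

/-- The point `p` satisfies the inequality exactly (with equality). -/
def ExactAt (n : ℕ) (β₀ : ℝ) (β : Fin n → ℝ) (β' : ℝ) (p : (Fin n → ℝ) × ℝ) : Prop :=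
  ineqLhs n β₀ β β' p = 0

/-- Facet-defining: there are `n+1` affinely independent points of `conv(G)`
satisfying the inequality exactly. -/
def IsFacet (n : ℕ) (ℓ u : ℝ) (c : ℕ → ℝ) (β₀ : ℝ) (β : Fin n → ℝ) (β' : ℝ) : Prop :=
  ∃ pts : Fin (n + 1) → (Fin n → ℝ) × ℝ,
    AffineIndependent ℝ pts ∧
    ∀ i, pts i ∈ convexHull ℝ (Gset n ℓ u c) ∧ ExactAt n β₀ β β' (pts i)

/-- The point `(x^k, m(x^k))` of `G`. -/
noncomputable def vtx (n : ℕ) (ℓ u : ℝ) (c : ℕ → ℝ) (k : ℕ) : (Fin n → ℝ) × ℝ :=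
  (xpt n ℓ u k, mval n ℓ u c k)

/-!
The objective is linear, so its maximum over `conv(G)` is its maximum over `G`, i.e. the maximum
of `α · x + α' m(x)` over the box. This function is affine in each coordinate separately, so
rounding the coordinates one at a time never decreases it and the maximum is attained at a vertex
of the box. A vertex with `k` coordinates equal to `u` is a permutation of `x^k`; `m` is symmetric,
and by the rearrangement inequality `α · x` is largest when the `k` largest coefficients `α_{σ(j)}`
meet the `u`'s.
-/

open Function

lemma IsGreatest.image_convexHull {E : Type*} [AddCommGroup E] [Module ℝ E] {f : E → ℝ}
    (hf : IsLinearMap ℝ f) {s : Set E} {M : ℝ} (h : IsGreatest (f '' s) M) :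
    IsGreatest (f '' convexHull ℝ s) M := by
  refine ⟨Set.image_mono (subset_convexHull ℝ s) h.1, ?_⟩
  rintro _ ⟨p, hp, rfl⟩
  exact convexHull_min (fun q hq => h.2 ⟨q, hq, rfl⟩) (convex_halfSpace_le hf M) hp

lemma isLinearMap_sum_mul_add_mul {ι : Type*} [Fintype ι] (α : ι → ℝ) (α' : ℝ) :
    IsLinearMap ℝ fun p : (ι → ℝ) × ℝ => ∑ j, α j * p.1 j + α' * p.2 where
  map_add p q := by
    simp only [Prod.fst_add, Prod.snd_add, Pi.add_apply, mul_add, sum_add_distrib]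
    ring
  map_smul r p := by
    simp only [Prod.smul_fst, Prod.smul_snd, Pi.smul_apply, smul_eq_mul, mul_add, mul_sum,
      mul_left_comm]

section Multiaffine

variable {ι : Type*} [DecidableEq ι]

def IsMultiaffine (F : (ι → ℝ) → ℝ) : Prop :=
  ∀ x i, ∃ a b : ℝ, ∀ t, F (update x i t) = a + b * t

lemma isMultiaffine_apply (j : ι) : IsMultiaffine fun x : ι → ℝ => x j := by
  intro x i
  rcases eq_or_ne j i with rfl | hji
  · exact ⟨0, 1, fun t => by simp⟩
  · exact ⟨x j, 0, fun t => by simp [update_of_ne hji]⟩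

lemma isMultiaffine_prod (J : Finset ι) : IsMultiaffine fun x : ι → ℝ => ∏ j ∈ J, x j := by
  intro x i
  by_cases hi : i ∈ J
  · exact ⟨0, ∏ j ∈ J \ {i}, x j, fun t => by simp [prod_update_of_mem hi, mul_comm]⟩
  · exact ⟨∏ j ∈ J, x j, 0, fun t => by simp [prod_update_of_notMem hi]⟩

namespace IsMultiaffine

variable {F G : (ι → ℝ) → ℝ}

lemma add (hF : IsMultiaffine F) (hG : IsMultiaffine G) : IsMultiaffine fun x => F x + G x := by
  intro x i
  obtain ⟨a, b, h⟩ := hF x i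
  obtain ⟨a', b', h'⟩ := hG x i
  exact ⟨a + a', b + b', fun t => by simp only [h, h']; ring⟩

lemma const_mul (hF : IsMultiaffine F) (r : ℝ) : IsMultiaffine fun x => r * F x := by
  intro x i
  obtain ⟨a, b, h⟩ := hF x i
  exact ⟨r * a, r * b, fun t => by simp only [h]; ring⟩

lemma sum {κ : Type*} {F : κ → (ι → ℝ) → ℝ} (hF : ∀ k, IsMultiaffine (F k)) (s : Finset κ) :
    IsMultiaffine fun x => ∑ k ∈ s, F k x := by
  intro x i
  choose a b h using fun k => hF k x i
  exact ⟨∑ k ∈ s, a k, ∑ k ∈ s, b k, fun t => by simp only [h, sum_add_distrib, sum_mul]⟩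

lemma le_max_update (hF : IsMultiaffine F) {ℓ u : ℝ} {x : ι → ℝ} {i : ι}
    (hx : x i ∈ Set.Icc ℓ u) : F x ≤ max (F (update x i ℓ)) (F (update x i u)) := by
  obtain ⟨a, b, h⟩ := hF x i
  have hFx : F x = a + b * x i := by rw [← h, update_eq_self]
  rw [hFx, h, h]
  rcases le_total 0 b with hb | hb
  · exact le_max_of_le_right (by nlinarith [hx.2])
  · exact le_max_of_le_left (by nlinarith [hx.1])

lemma exists_ge_endpoints_on (hF : IsMultiaffine F) {ℓ u : ℝ} (hlu : ℓ ≤ u) {x : ι → ℝ}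
    (hx : ∀ j, x j ∈ Set.Icc ℓ u) (T : Finset ι) :
    ∃ y : ι → ℝ, (∀ j, y j ∈ Set.Icc ℓ u) ∧ (∀ j ∈ T, y j = ℓ ∨ y j = u) ∧ F x ≤ F y := by
  induction T using Finset.induction_on with
  | empty => exact ⟨x, hx, by simp, le_rfl⟩
  | @insert a T haT ih =>
    obtain ⟨y, hy, hyT, hxy⟩ := ih
    obtain ⟨t, ht, hyt⟩ : ∃ t, (t = ℓ ∨ t = u) ∧ F y ≤ F (update y a t) := by
      rcases le_max_iff.1 (hF.le_max_update (hy a)) with h | h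
      exacts [⟨ℓ, .inl rfl, h⟩, ⟨u, .inr rfl, h⟩]
    refine ⟨update y a t, ?_, ?_, hxy.trans hyt⟩
    · refine (forall_update_iff y fun j s => s ∈ Set.Icc ℓ u).2 ⟨?_, fun j _ => hy j⟩
      rcases ht with rfl | rfl
      exacts [Set.left_mem_Icc.2 hlu, Set.right_mem_Icc.2 hlu]
    · rw [forall_mem_insert, update_self]
      exact ⟨ht, fun j hj => by rw [update_of_ne (ne_of_mem_of_not_mem hj haT)]; exact hyT j hj⟩

lemma exists_ge_endpoints [Fintype ι] (hF : IsMultiaffine F) {ℓ u : ℝ} (hlu : ℓ ≤ u)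
    {x : ι → ℝ} (hx : ∀ j, x j ∈ Set.Icc ℓ u) :
    ∃ y : ι → ℝ, (∀ j, y j = ℓ ∨ y j = u) ∧ F x ≤ F y := by
  obtain ⟨y, -, hy, hxy⟩ := hF.exists_ge_endpoints_on hlu hx univ
  exact ⟨y, fun j => hy j (mem_univ j), hxy⟩

end IsMultiaffine

end Multiaffine

section BoxVertices

variable {n : ℕ} {ℓ u : ℝ}

lemma mPoly_comp_perm (c : ℕ → ℝ) (x : Fin n → ℝ) (τ : Equiv.Perm (Fin n)) :
    mPoly n c (x ∘ τ) = mPoly n c x := by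
  simp only [mPoly, ← esymm_map_val, ← Multiset.map_map, Multiset.map_univ_val_equiv]

lemma isMultiaffine_mPoly (c : ℕ → ℝ) : IsMultiaffine (mPoly n c) :=
  IsMultiaffine.sum (fun i => (IsMultiaffine.sum isMultiaffine_prod _).const_mul (c i)) _

lemma xpt_mem_Icc (hlu : ℓ ≤ u) (k : ℕ) (j : Fin n) : xpt n ℓ u k j ∈ Set.Icc ℓ u := by
  unfold xpt
  split_ifs
  exacts [Set.right_mem_Icc.2 hlu, Set.left_mem_Icc.2 hlu]

lemma antitone_xpt (hlu : ℓ ≤ u) (k : ℕ) : Antitone (xpt n ℓ u k) := by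
  intro i j hij
  unfold xpt
  split_ifs with hj hi hi
  exacts [le_rfl, absurd (lt_of_le_of_lt (Fin.le_def.1 hij) hj) hi, hlu, le_rfl]

lemma sum_mul_xpt (β : Fin n → ℝ) (k : ℕ) :
    ∑ i, β i * xpt n ℓ u k i =
      u * ∑ j ∈ univ.filter (fun j : Fin n => (j : ℕ) < k), β j
      + ℓ * ∑ j ∈ univ.filter (fun j : Fin n => k ≤ (j : ℕ)), β j := by
  simp only [xpt, mul_ite, sum_ite, mul_sum, not_lt, mul_comm]

lemma exists_eq_xpt_comp_perm {y : Fin n → ℝ} (hy : ∀ j, y j = ℓ ∨ y j = u) :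
    ∃ k ≤ n, ∃ τ : Equiv.Perm (Fin n), y = xpt n ℓ u k ∘ τ := by
  set S := univ.filter fun j => y j = u
  set k := #S
  set T := univ.filter fun j : Fin n => (j : ℕ) < k
  have hkn : k ≤ n := (card_le_univ S).trans_eq (Fintype.card_fin n)
  have hT : #T = k := by simp [T, Fin.card_filter_val_lt, hkn]
  obtain ⟨τ, hτ⟩ := Equiv.Perm.exists_map_finset_eq T S hT
  refine ⟨k, hkn, τ.symm, funext fun j => ?_⟩
  have hjS : j ∈ S ↔ ((τ.symm j : Fin n) : ℕ) < k := by rw [← hτ, mem_map_equiv]; simp [T]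
  by_cases hju : y j = u
  · simp [xpt, hju, ← hjS, S]
  · simp [xpt, (hy j).resolve_right hju, hjS.not.1 (by simp [S, hju])]

end BoxVertices

section Objective

variable {n : ℕ} {ℓ u : ℝ} (c : ℕ → ℝ) (α : Fin n → ℝ) (α' : ℝ)

lemma isMultiaffine_objective :
    IsMultiaffine fun x : Fin n → ℝ => ∑ j, α j * x j + α' * mPoly n c x :=
  (IsMultiaffine.sum (fun j => (isMultiaffine_apply j).const_mul (α j)) univ).add
    ((isMultiaffine_mPoly c).const_mul α')

lemma sum_mul_xpt_comp_perm_le (hlu : ℓ ≤ u) {σ : Equiv.Perm (Fin n)} (hσ : Antitone (α ∘ σ))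
    (k : ℕ) (τ : Equiv.Perm (Fin n)) :
    ∑ j, α j * xpt n ℓ u k (τ j) ≤ ∑ i, α (σ i) * xpt n ℓ u k i :=
  calc ∑ j, α j * xpt n ℓ u k (τ j) = ∑ i, α (σ i) * xpt n ℓ u k ((σ.trans τ) i) :=
        (Equiv.sum_comp σ fun j => α j * xpt n ℓ u k (τ j)).symm
    _ ≤ ∑ i, α (σ i) * xpt n ℓ u k i :=
        (hσ.monovary (antitone_xpt hlu k)).sum_mul_comp_perm_le_sum_mul

lemma isGreatest_image_Gset (hlu : ℓ ≤ u) {σ : Equiv.Perm (Fin n)} (hσ : Antitone (α ∘ σ)) :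
    IsGreatest ((fun p : (Fin n → ℝ) × ℝ => ∑ j, α j * p.1 j + α' * p.2) '' Gset n ℓ u c)
      ((range (n + 1)).sup' nonempty_range_add_one
        fun k => ∑ i, α (σ i) * xpt n ℓ u k i + α' * mval n ℓ u c k) := by
  refine ⟨?_, ?_⟩
  · obtain ⟨k, -, hk⟩ := exists_mem_eq_sup' nonempty_range_add_one
      fun k => ∑ i, α (σ i) * xpt n ℓ u k i + α' * mval n ℓ u c k
    refine ⟨(xpt n ℓ u k ∘ σ.symm, mPoly n c (xpt n ℓ u k ∘ σ.symm)),
      ⟨fun j => xpt_mem_Icc hlu k _, rfl⟩, ?_⟩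
    rw [hk, mval, mPoly_comp_perm]
    dsimp only
    rw [← Equiv.sum_comp σ fun j => α j * (xpt n ℓ u k ∘ σ.symm) j]
    simp
  · rintro _ ⟨p, ⟨hpX, hpm⟩, rfl⟩
    obtain ⟨y, hy, hpy⟩ := (isMultiaffine_objective c α α').exists_ge_endpoints hlu hpX
    obtain ⟨k, hkn, τ, rfl⟩ := exists_eq_xpt_comp_perm hy
    rw [mPoly_comp_perm] at hpy
    refine le_sup'_of_le _ (mem_range.2 (Nat.lt_add_one_of_le hkn)) ?_
    dsimp only
    rw [hpm, mval]
    exact hpy.trans (add_le_add_left (sum_mul_xpt_comp_perm_le α hlu hσ k τ) _)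

end Objective

theorem stmt1_general (n : ℕ) (ℓ u : ℝ) (hlu : ℓ < u) (c : ℕ → ℝ)
    (α : Fin n → ℝ) (α' : ℝ) (σ : Equiv.Perm (Fin n))
    (hσ : ∀ i j : Fin n, i ≤ j → α (σ j) ≤ α (σ i)) :
    IsGreatest {v : ℝ | ∃ p ∈ convexHull ℝ (Gset n ℓ u c), v = ∑ j, α j * p.1 j + α' * p.2}
      ((Finset.range (n + 1)).sup' Finset.nonempty_range_add_one
        (fun k =>
          u * ∑ j ∈ Finset.univ.filter (fun j : Fin n => (j : ℕ) < k), α (σ j)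
          + ℓ * ∑ j ∈ Finset.univ.filter (fun j : Fin n => k ≤ (j : ℕ)), α (σ j)
          + α' * mval n ℓ u c k)) := by
  have h := (isGreatest_image_Gset c α α' hlu.le hσ).image_convexHull
    (isLinearMap_sum_mul_add_mul α α')
  simp only [sum_mul_xpt] at h
  convert h using 1
  ext v
  simp [eq_comm]

/-- Linear optimization over `conv(G)` reduces to a maximum over the
`n+1` points `(x^k, m(x^k))`, after sorting the objective coefficients decreasingly. -/
theorem stmt1 (n : ℕ) (hn : 2 ≤ n) (ℓ u : ℝ) (hlu : ℓ < u) (c : ℕ → ℝ)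
    (α : Fin n → ℝ) (α' : ℝ) (σ : Equiv.Perm (Fin n))
    (hσ : ∀ i j : Fin n, i ≤ j → α (σ j) ≤ α (σ i)) :
    IsGreatest {v : ℝ | ∃ p ∈ convexHull ℝ (Gset n ℓ u c), v = ∑ j, α j * p.1 j + α' * p.2}
      ((Finset.range (n + 1)).sup' Finset.nonempty_range_add_one
        (fun k =>
          u * ∑ j ∈ Finset.univ.filter (fun j : Fin n => (j : ℕ) < k), α (σ j)
          + ℓ * ∑ j ∈ Finset.univ.filter (fun j : Fin n => k ≤ (j : ℕ)), α (σ j)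
          + α' * mval n ℓ u c k)) :=
  stmt1_general n ℓ u hlu c α α' σ hσ
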